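/- arXiv:1508.04664 — 3 statements merged into one kernel-verified Lean document; each statement's English description precedes it below -/
import Mathlib

section
/- Fix α < 0 and κ > 0, and suppose that θₙ·coth(θₙ) is well-defined for all n considered. Then for any real number r, the set M = {n ∈ ℕ : θₙ·coth(θₙ) = r}, where θₙ·coth(θₙ) is interpreted as √(α+n²κ²)·coth(√(α+n²κ²)) for α+n²κ² > 0, as √(|α|−n²κ²)·cot(√(|α|−n²κ²)) for α+n²κ² < 0, and as 1 for α+n²κ² = 0, is finite. -/
open Real

/-- The kernel-equation left-hand side `l(n, α) = θₙ coth θₙ`, with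
`θₙ = √(α + n²κ²)`, interpreted via `cot` for imaginary `θₙ` and by `1` at `θₙ = 0`. -/
noncomputable def lfun (κ α : ℝ) (n : ℕ) : ℝ :=
  let t : ℝ := α + (n : ℝ) ^ 2 * κ ^ 2
  if 0 < t then Real.sqrt t * Real.cosh (Real.sqrt t) / Real.sinh (Real.sqrt t)
  else if t < 0 then Real.sqrt (-t) * Real.cos (Real.sqrt (-t)) / Real.sin (Real.sqrt (-t))
  else 1

lemma sinh_lt_mul_cosh' {x : ℝ} (hx : 0 < x) : Real.sinh x < x * Real.cosh x := by
  have hmono : StrictMonoOn (fun x : ℝ => x * Real.cosh x - Real.sinh x) (Set.Ici 0) := by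
    apply strictMonoOn_of_deriv_pos (convex_Ici 0)
    · exact ((continuous_id.mul Real.continuous_cosh).sub Real.continuous_sinh).continuousOn
    · intro y hy
      rw [interior_Ici] at hy
      have h1 : HasDerivAt (fun x : ℝ => x * Real.cosh x - Real.sinh x)
          (1 * Real.cosh y + y * Real.sinh y - Real.cosh y) y :=
        ((hasDerivAt_id y).mul (Real.hasDerivAt_cosh y)).sub (Real.hasDerivAt_sinh y)
      rw [h1.deriv]
      have hy0 : 0 < y := hy
      have := Real.sinh_pos_iff.2 hy0
      nlinarith [mul_pos hy0 this]
  have := hmono (Set.self_mem_Ici) (Set.mem_Ici.2 hx.le) hx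
  simpa using this

lemma sinh_div_strictMono' : StrictMonoOn (fun x : ℝ => Real.sinh x / x) (Set.Ioi 0) := by
  apply strictMonoOn_of_deriv_pos (convex_Ioi 0)
  · exact Real.continuous_sinh.continuousOn.div continuousOn_id
      (fun x hx => ne_of_gt (Set.mem_Ioi.1 hx))
  · intro y hy
    rw [interior_Ioi] at hy
    have hy0 : (y : ℝ) ≠ 0 := ne_of_gt hy
    have h1 : HasDerivAt (fun x : ℝ => Real.sinh x / x)
        ((Real.cosh y * y - Real.sinh y * 1) / y ^ 2) y :=
      (Real.hasDerivAt_sinh y).div (hasDerivAt_id y) hy0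
    rw [h1.deriv]
    have h2 := sinh_lt_mul_cosh' hy
    have h3 : (0:ℝ) < y ^ 2 := by positivity
    apply div_pos _ h3
    nlinarith

lemma coth_mul_strictMono' {x y : ℝ} (hx : 0 < x) (hxy : x < y) :
    x * Real.cosh x / Real.sinh x < y * Real.cosh y / Real.sinh y := by
  have hy : 0 < y := hx.trans hxy
  have hsx : 0 < Real.sinh x := Real.sinh_pos_iff.2 hx
  have hsy : 0 < Real.sinh y := Real.sinh_pos_iff.2 hy
  rw [div_lt_div_iff₀ hsx hsy]
  have ha : (0:ℝ) < y - x := by linarith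
  have hb : y - x < y + x := by linarith
  have key := sinh_div_strictMono' (Set.mem_Ioi.2 ha) (Set.mem_Ioi.2 (ha.trans hb)) hb
  simp only at key
  rw [div_lt_div_iff₀ ha (ha.trans hb)] at key
  rw [Real.sinh_sub, Real.sinh_add] at key
  nlinarith [key]

/-- For fixed `α < 0`, `κ > 0` such that `l(n, α)` is well-defined for every `n`,
the solution set `M = {n ∈ ℕ : l(n, α) = r}` of the kernel equation is finite. -/
theorem stmt_3 (κ α : ℝ) (hκ : 0 < κ) (hα : α < 0)
    (hwd : ∀ n : ℕ, α + (n : ℝ) ^ 2 * κ ^ 2 < 0 →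
      Real.sin (Real.sqrt (-(α + (n : ℝ) ^ 2 * κ ^ 2))) ≠ 0)
    (r : ℝ) : {n : ℕ | lfun κ α n = r}.Finite := by
  obtain ⟨N, hN⟩ := exists_nat_gt (Real.sqrt (-α) / κ)
  have hpos : ∀ n : ℕ, N ≤ n → 0 < α + (n : ℝ) ^ 2 * κ ^ 2 := by
    intro n hn
    have h1 : Real.sqrt (-α) < (n : ℝ) * κ := by
      have : Real.sqrt (-α) < (N : ℝ) * κ := by
        rwa [div_lt_iff₀ hκ] at hN
      have h2 : (N : ℝ) * κ ≤ (n : ℝ) * κ := by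
        have : (N : ℝ) ≤ (n : ℝ) := Nat.cast_le.2 hn
        nlinarith
      linarith
    have h0 : 0 ≤ Real.sqrt (-α) := Real.sqrt_nonneg _
    have h2 : Real.sqrt (-α) ^ 2 < ((n : ℝ) * κ) ^ 2 := by nlinarith
    rw [Real.sq_sqrt (by linarith : (0:ℝ) ≤ -α)] at h2
    nlinarith
  have hlf : ∀ n : ℕ, 0 < α + (n : ℝ) ^ 2 * κ ^ 2 →
      lfun κ α n = Real.sqrt (α + (n : ℝ) ^ 2 * κ ^ 2) *
        Real.cosh (Real.sqrt (α + (n : ℝ) ^ 2 * κ ^ 2)) /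
        Real.sinh (Real.sqrt (α + (n : ℝ) ^ 2 * κ ^ 2)) := by
    intro n ht
    simp only [lfun]
    rw [if_pos ht]
  have hmono : ∀ m n : ℕ, N ≤ m → m < n → lfun κ α m < lfun κ α n := by
    intro m n hm hmn
    have htm := hpos m hm
    have htn := hpos n (hm.trans hmn.le)
    have htlt : α + (m : ℝ) ^ 2 * κ ^ 2 < α + (n : ℝ) ^ 2 * κ ^ 2 := by
      have h1 : (m : ℝ) < (n : ℝ) := Nat.cast_lt.2 hmn
      have h2 : (0:ℝ) ≤ (m : ℝ) := Nat.cast_nonneg m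
      have h3 : (m : ℝ) ^ 2 < (n : ℝ) ^ 2 := by nlinarith
      have h4 : (0:ℝ) < κ ^ 2 := by positivity
      nlinarith
    have hs : Real.sqrt (α + (m : ℝ) ^ 2 * κ ^ 2) < Real.sqrt (α + (n : ℝ) ^ 2 * κ ^ 2) :=
      Real.sqrt_lt_sqrt htm.le htlt
    have hs0 : 0 < Real.sqrt (α + (m : ℝ) ^ 2 * κ ^ 2) := Real.sqrt_pos.2 htm
    rw [hlf m htm, hlf n htn]
    exact coth_mul_strictMono' hs0 hs
  have hSsub : ({n : ℕ | N ≤ n ∧ lfun κ α n = r}).Subsingleton := by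
    intro a ha b hb
    by_contra hne
    rcases Nat.lt_or_ge a b with h | h
    · have := hmono a b ha.1 h
      rw [ha.2, hb.2] at this
      exact lt_irrefl r this
    · have hba : b < a := lt_of_le_of_ne h (Ne.symm hne)
      have := hmono b a hb.1 hba
      rw [ha.2, hb.2] at this
      exact lt_irrefl r this
  apply Set.Finite.subset ((Set.finite_Iio N).union hSsub.finite)
  intro n hn
  by_cases h : n < N
  · exact Or.inl h
  · exact Or.inr ⟨le_of_not_gt h, hn⟩
end

section
/- Let p be a prime with p ≡ 1 (mod 4) and let N ≥ 1, and put H = p^(2N−1). Then the number of pairs (a, b) ∈ ℕ × ℕ with a < b and a² + b² = H equals N, and in every such representation both a and b are nonzero. -/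
open Zsqrtd

lemma gi_norm_comp (z : GaussianInt) : z.norm = z.re * z.re + z.im * z.im := by
  rw [Zsqrtd.norm_def]; ring

lemma gi_units {u : GaussianInt} (hu : IsUnit u) :
    u = 1 ∨ u = -1 ∨ u = ⟨0, 1⟩ ∨ u = ⟨0, -1⟩ := by
  have h1 : u.norm = 1 := (Zsqrtd.norm_eq_one_iff' (by norm_num) u).mpr hu
  rw [gi_norm_comp] at h1
  have h2 : -1 ≤ u.re ∧ u.re ≤ 1 := by constructor <;> nlinarith [mul_self_nonneg u.im]
  have h3 : -1 ≤ u.im ∧ u.im ≤ 1 := by constructor <;> nlinarith [mul_self_nonneg u.re]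
  obtain ⟨z1, z2⟩ := h2; obtain ⟨z3, z4⟩ := h3
  interval_cases h : u.re <;> interval_cases h' : u.im <;> simp_all [Zsqrtd.ext_iff]

lemma gi_unit_i : IsUnit (⟨0, 1⟩ : GaussianInt) := by
  refine IsUnit.of_mul_eq_one ⟨0, -1⟩ ?_
  ext <;> simp [Zsqrtd.re_mul, Zsqrtd.im_mul]

lemma gi_unit_negi : IsUnit (⟨0, -1⟩ : GaussianInt) := by
  refine IsUnit.of_mul_eq_one ⟨0, 1⟩ ?_
  ext <;> simp [Zsqrtd.re_mul, Zsqrtd.im_mul]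

set_option synthInstance.maxHeartbeats 1000000 in
lemma gi_prime_of_norm_prime {p : ℕ} (hp : p.Prime) {z : GaussianInt}
    (hz : z.norm = p) : Prime z := by
  rw [← irreducible_iff_prime]
  constructor
  · intro hu
    have := (Zsqrtd.norm_eq_one_iff' (by norm_num) z).mpr hu
    rw [hz] at this
    exact_mod_cast hp.one_lt.ne' (by exact_mod_cast this)
  · intro a b hab
    have hn : a.norm * b.norm = p := by rw [← Zsqrtd.norm_mul, ← hab, hz]
    have hn' : a.norm.natAbs * b.norm.natAbs = p := by
      have := congrArg Int.natAbs hn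
      rwa [Int.natAbs_mul, Int.natAbs_natCast] at this
    rcases (Nat.prime_mul_iff.mp (hn' ▸ hp)) with ⟨_, h1⟩ | ⟨_, h1⟩
    · right; exact Zsqrtd.norm_eq_one_iff.mp h1
    · left; exact Zsqrtd.norm_eq_one_iff.mp h1

lemma gi_norm_pow (z : GaussianInt) (n : ℕ) : (z ^ n).norm = z.norm ^ n := by
  induction n with
  | zero => simp
  | succ n ih => rw [pow_succ, pow_succ, Zsqrtd.norm_mul, ih]

lemma gi_fact {p : ℕ} (hp : p.Prime) {π : GaussianInt} (hπ : π.norm = p) :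
    ∀ k (z : GaussianInt), z.norm = (p : ℤ) ^ k →
      ∃ j ≤ k, ∃ u, IsUnit u ∧ z = u * π ^ j * (star π) ^ (k - j) := by
  intro k
  induction k with
  | zero =>
    intro z hz
    exact ⟨0, le_refl 0, z, (Zsqrtd.norm_eq_one_iff' (by norm_num) z).mp (by simpa using hz),
      by simp⟩
  | succ k ih =>
    intro z hz
    have hπp : π * star π = (p : GaussianInt) := by
      rw [← Zsqrtd.norm_eq_mul_conj, hπ]; simp
    have hprime : Prime π := gi_prime_of_norm_prime hp hπ
    have hp0 : (p : ℤ) ≠ 0 := by exact_mod_cast hp.ne_zero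
    have hdvd : π ∣ z * star z := by
      rw [← Zsqrtd.norm_eq_mul_conj, hz]
      push_cast
      exact Dvd.dvd.trans ⟨star π, hπp.symm⟩ (dvd_pow_self _ (Nat.succ_ne_zero k))
    rcases hprime.dvd_or_dvd hdvd with h | h
    · obtain ⟨w, hw⟩ := h
      have hwn : w.norm = (p : ℤ) ^ k := by
        have h2 := congrArg Zsqrtd.norm hw
        rw [Zsqrtd.norm_mul, hπ, hz, pow_succ, mul_comm ((p:ℤ)^k)] at h2
        exact (mul_left_cancel₀ hp0 h2).symm
      obtain ⟨j, hj, u, hu, hwu⟩ := ih w hwn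
      refine ⟨j + 1, by omega, u, hu, ?_⟩
      have : k + 1 - (j + 1) = k - j := by omega
      rw [this, hw, hwu]; ring
    · obtain ⟨w, hw⟩ := h
      have hzw : z = star π * star w := by
        have := congrArg star hw
        rwa [star_star, star_mul, mul_comm] at this
      have hwn : (star w).norm = (p : ℤ) ^ k := by
        have h2 := congrArg Zsqrtd.norm hzw
        rw [Zsqrtd.norm_mul, Zsqrtd.norm_conj, hπ, hz, pow_succ, mul_comm ((p:ℤ)^k)] at h2
        exact (mul_left_cancel₀ hp0 h2).symm
      obtain ⟨j, hj, u, hu, hwu⟩ := ih (star w) hwn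
      refine ⟨j, by omega, u, hu, ?_⟩
      have : k + 1 - j = (k - j) + 1 := by omega
      rw [this, hzw, hwu]; ring

lemma gi_not_lt {π : GaussianInt} (hπ : Prime π) (hst : ¬ π ∣ star π)
    {j j' k : ℕ} (hj : j ≤ k) (hj' : j' ≤ k) {u u' : GaussianInt}
    (hu : IsUnit u) (hu' : IsUnit u')
    (heq : u * π ^ j * (star π) ^ (k - j) = u' * π ^ j' * (star π) ^ (k - j')) :
    ¬ j < j' := by
  intro hlt
  have hne : π ≠ 0 := hπ.ne_zero
  obtain ⟨m, hm, rfl⟩ : ∃ m, 0 < m ∧ j' = m + j := ⟨j' - j, by omega, by omega⟩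
  have key : u * (star π) ^ (k - j) * π ^ j
      = (u' * π ^ m * (star π) ^ (k - (m + j))) * π ^ j := by
    rw [pow_add] at heq
    calc u * (star π) ^ (k - j) * π ^ j = u * π ^ j * (star π) ^ (k - j) := by ring
    _ = u' * (π ^ m * π ^ j) * (star π) ^ (k - (m + j)) := heq
    _ = (u' * π ^ m * (star π) ^ (k - (m + j))) * π ^ j := by ring
  have h2 := mul_right_cancel₀ (pow_ne_zero j hne) key
  have hd : π ∣ u * (star π) ^ (k - j) := by
    rw [h2]
    exact dvd_mul_of_dvd_left (dvd_mul_of_dvd_right (dvd_pow_self π hm.ne') _) _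
  obtain ⟨v, rfl⟩ := hu
  rw [Units.dvd_mul_left] at hd
  rcases Nat.eq_zero_or_pos (k - j) with h0 | h0
  · rw [h0, pow_zero] at hd
    exact hπ.not_unit (isUnit_of_dvd_one hd)
  · exact hst (hπ.dvd_of_dvd_pow hd)

lemma gi_comps {z w u : GaussianInt} (hu : IsUnit u)
    (h : w = u * z ∨ w = u * star z) :
    (w.re.natAbs = z.re.natAbs ∧ w.im.natAbs = z.im.natAbs) ∨
    (w.re.natAbs = z.im.natAbs ∧ w.im.natAbs = z.re.natAbs) := by
  rcases gi_units hu with rfl | rfl | rfl | rfl <;> rcases h with rfl | rfl <;>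
    simp [Zsqrtd.re_mul, Zsqrtd.im_mul, Zsqrtd.re_star, Zsqrtd.im_star, Int.natAbs_neg]

lemma gi_eight {z w : GaussianInt}
    (h : (w.re.natAbs = z.re.natAbs ∧ w.im.natAbs = z.im.natAbs) ∨
         (w.re.natAbs = z.im.natAbs ∧ w.im.natAbs = z.re.natAbs)) :
    ∃ u, IsUnit u ∧ (w = u * z ∨ w = u * star z) := by
  rcases h with ⟨h1, h2⟩ | ⟨h1, h2⟩ <;>
  rcases Int.natAbs_eq_natAbs_iff.mp h1 with e1 | e1 <;>
  rcases Int.natAbs_eq_natAbs_iff.mp h2 with e2 | e2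
  · exact ⟨1, isUnit_one, Or.inl (by ext <;> simp [e1, e2])⟩
  · exact ⟨1, isUnit_one, Or.inr (by ext <;> simp [Zsqrtd.re_star, Zsqrtd.im_star, e1, e2])⟩
  · exact ⟨-1, isUnit_one.neg, Or.inr (by ext <;> simp [Zsqrtd.re_star, Zsqrtd.im_star, e1, e2])⟩
  · exact ⟨-1, isUnit_one.neg, Or.inl (by ext <;> simp [e1, e2])⟩
  · exact ⟨⟨0, 1⟩, gi_unit_i, Or.inr (by ext <;> simp [Zsqrtd.re_mul, Zsqrtd.im_mul, Zsqrtd.re_star, Zsqrtd.im_star, e1, e2])⟩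
  · exact ⟨⟨0, -1⟩, gi_unit_negi, Or.inl (by ext <;> simp [Zsqrtd.re_mul, Zsqrtd.im_mul, e1, e2])⟩
  · exact ⟨⟨0, 1⟩, gi_unit_i, Or.inl (by ext <;> simp [Zsqrtd.re_mul, Zsqrtd.im_mul, e1, e2])⟩
  · exact ⟨⟨0, -1⟩, gi_unit_negi, Or.inr (by ext <;> simp [Zsqrtd.re_mul, Zsqrtd.im_mul, Zsqrtd.re_star, Zsqrtd.im_star, e1, e2])⟩

set_option maxHeartbeats 2000000 in
/-- For a prime `p ≡ 1 (mod 4)` and `N ≥ 1`, the number `H = p^(2N−1)` has exactly `N`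
representations `H = a² + b²` with `a < b`, and in each such representation both `a` and
`b` are nonzero. -/
theorem stmt_4 (p N : ℕ) (hp : p.Prime) (hp4 : p % 4 = 1) (hN : 1 ≤ N) :
    {ab : ℕ × ℕ | ab.1 < ab.2 ∧ ab.1 ^ 2 + ab.2 ^ 2 = p ^ (2 * N - 1)}.ncard = N ∧
    ∀ a b : ℕ, a < b → a ^ 2 + b ^ 2 = p ^ (2 * N - 1) → a ≠ 0 ∧ b ≠ 0 := by
  have podd : p % 2 = 1 := by omega
  have hkodd : (2 * N - 1) % 2 = 1 := by omega
  set k := 2 * N - 1 with hkdef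
  -- a square is never p ^ k
  have sq_ne : ∀ b : ℕ, b ^ 2 ≠ p ^ k := by
    intro b h
    have hb0 : b ≠ 0 := by
      rintro rfl
      exact (pow_ne_zero k hp.ne_zero) (by simpa using h.symm)
    have := congrArg (fun n => n.factorization p) h
    simp only [Nat.factorization_pow, hp.factorization_pow, Finsupp.smul_apply,
      Finsupp.single_eq_same, smul_eq_mul] at this
    omega
  have hpkodd : p ^ k % 2 = 1 := Nat.odd_iff.mp ((Nat.odd_iff.mpr podd).pow)
  have part2 : ∀ a b : ℕ, a < b → a ^ 2 + b ^ 2 = p ^ k → a ≠ 0 ∧ b ≠ 0 := by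
    intro a b hab h
    refine ⟨?_, by omega⟩
    rintro rfl
    exact sq_ne b (by simpa using h)
  refine ⟨?_, part2⟩
  -- set up the Gaussian prime π
  haveI := Fact.mk hp
  obtain ⟨A, B, hAB⟩ := Nat.Prime.sq_add_sq (p := p) (by omega)
  have hsq : ∀ C : ℕ, C ^ 2 ≠ p := by
    intro C hC
    have hdvd : C ∣ p := ⟨C, by rw [← hC]; ring⟩
    have h2 := hp.one_lt
    rcases hp.eq_one_or_self_of_dvd C hdvd with rfl | rfl
    · simp at hC; omega
    · nlinarith
  have hA0 : A ≠ 0 := by rintro rfl; exact hsq B (by simpa using hAB)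
  have hB0 : B ≠ 0 := by rintro rfl; exact hsq A (by simpa using hAB)
  have hABne : A ≠ B := by
    rintro rfl
    have : p = 2 * A ^ 2 := by omega
    omega
  obtain ⟨π, hπdef⟩ : ∃ π' : GaussianInt, π' = ⟨(A : ℤ), (B : ℤ)⟩ := ⟨_, rfl⟩
  have hπnorm : π.norm = (p : ℤ) := by
    rw [gi_norm_comp, hπdef]
    simp only
    have h1 : ((A ^ 2 + B ^ 2 : ℕ) : ℤ) = (p : ℤ) := by exact_mod_cast hAB
    push_cast at h1 ⊢
    linarith [h1]
  have hπprime : Prime π := gi_prime_of_norm_prime hp hπnorm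
  have hstarnorm : (star π).norm = (p : ℤ) := by rw [Zsqrtd.norm_conj]; exact hπnorm
  have hnd : ¬ π ∣ star π := by
    intro hd
    have hassoc := hπprime.associated_of_dvd (gi_prime_of_norm_prime hp hstarnorm) hd
    obtain ⟨v, hv⟩ := hassoc
    have hA0' : (0 : ℤ) < A := by positivity
    have hB0' : (0 : ℤ) < B := by positivity
    have hABne' : (A : ℤ) ≠ (B : ℤ) := by exact_mod_cast hABne
    rcases gi_units v.isUnit with hv1 | hv1 | hv1 | hv1 <;> rw [hv1] at hv <;>
      simp only [hπdef, Zsqrtd.ext_iff, Zsqrtd.re_mul, Zsqrtd.im_mul, Zsqrtd.re_star,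
        Zsqrtd.im_star, Zsqrtd.re_one, Zsqrtd.im_one, Zsqrtd.re_neg, Zsqrtd.im_neg] at hv <;>
      omega
  -- the building blocks
  obtain ⟨g, hg⟩ : ∃ g : ℕ → GaussianInt, ∀ j, g j = π ^ j * (star π) ^ (k - j) :=
    ⟨_, fun _ => rfl⟩
  have hznorm : ∀ j, j ≤ k → (g j).norm = (p : ℤ) ^ k := by
    intro j hj
    rw [hg j]
    rw [Zsqrtd.norm_mul, gi_norm_pow, gi_norm_pow, Zsqrtd.norm_conj, hπnorm, ← pow_add]
    congr 1
    omega
  -- components of any z with norm p^k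
  have comps : ∀ z : GaussianInt, z.norm = (p : ℤ) ^ k →
      z.re.natAbs ^ 2 + z.im.natAbs ^ 2 = p ^ k ∧ z.re.natAbs ≠ z.im.natAbs := by
    intro z hz
    have h1 : ((z.re.natAbs ^ 2 + z.im.natAbs ^ 2 : ℕ) : ℤ) = ((p ^ k : ℕ) : ℤ) := by
      push_cast
      rw [sq_abs, sq_abs]
      rw [gi_norm_comp] at hz
      push_cast
      nlinarith [hz]
    have h2 : z.re.natAbs ^ 2 + z.im.natAbs ^ 2 = p ^ k := by exact_mod_cast h1
    refine ⟨h2, ?_⟩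
    intro he
    rw [he] at h2
    omega
  -- star of a building block
  have hgstar : ∀ j, j ≤ k → star (g j) = π ^ (k - j) * (star π) ^ (k - (k - j)) := by
    intro j hj
    rw [hg j, star_mul, star_pow, star_pow, star_star, show k - (k - j) = j by omega]
  -- the parametrization
  obtain ⟨F, hF⟩ : ∃ F : ℕ → ℕ × ℕ, ∀ j, F j =
      (min ((g j).re.natAbs) ((g j).im.natAbs), max ((g j).re.natAbs) ((g j).im.natAbs)) :=
    ⟨_, fun _ => rfl⟩
  -- image ⊆ set
  have himage : {ab : ℕ × ℕ | ab.1 < ab.2 ∧ ab.1 ^ 2 + ab.2 ^ 2 = p ^ k} = F '' (Set.Iio N) := by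
    apply Set.eq_of_subset_of_subset
    · rintro ⟨a, b⟩ ⟨hab, habk⟩
      simp only [Set.mem_setOf_eq] at hab habk
      obtain ⟨z, hzdef⟩ : ∃ z' : GaussianInt, z' = ⟨(a : ℤ), (b : ℤ)⟩ := ⟨_, rfl⟩
      have hz : z.norm = (p : ℤ) ^ k := by
        rw [gi_norm_comp, hzdef]
        simp only
        have h1 : ((a ^ 2 + b ^ 2 : ℕ) : ℤ) = ((p ^ k : ℕ) : ℤ) := by exact_mod_cast habk
        push_cast at h1 ⊢
        nlinarith [h1]
      obtain ⟨j, hj, u, hu, hzu⟩ := gi_fact hp hπnorm k z hz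
      obtain ⟨j₀, hj₀N, hrel⟩ : ∃ j₀, j₀ < N ∧
          ((z.re.natAbs = (g j₀).re.natAbs ∧ z.im.natAbs = (g j₀).im.natAbs) ∨
          (z.re.natAbs = (g j₀).im.natAbs ∧ z.im.natAbs = (g j₀).re.natAbs)) := by
        rcases le_or_gt j (k - j) with hle | hlt
        · refine ⟨j, by omega, ?_⟩
          refine gi_comps hu (Or.inl ?_)
          rw [hzu, hg j]
          ring
        · refine ⟨k - j, by omega, ?_⟩
          refine gi_comps hu (Or.inr ?_)
          rw [hgstar (k - j) (by omega), show k - (k - j) = j by omega, hzu]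
          ring
      refine ⟨j₀, hj₀N, ?_⟩
      have hza : z.re.natAbs = a := by rw [hzdef]; exact Int.natAbs_natCast a
      have hzb : z.im.natAbs = b := by rw [hzdef]; exact Int.natAbs_natCast b
      rw [hza, hzb] at hrel
      rw [hF j₀]
      rcases hrel with ⟨h1, h2⟩ | ⟨h1, h2⟩
      · rw [← h1, ← h2, min_eq_left hab.le, max_eq_right hab.le]
      · rw [← h1, ← h2, min_eq_right hab.le, max_eq_left hab.le]
    · rintro ab ⟨j, hjN, rfl⟩
      simp only [Set.mem_Iio] at hjN
      have hjk : j ≤ k := by omega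
      obtain ⟨hsum, hne⟩ := comps _ (hznorm j hjk)
      rw [hF j]
      refine ⟨by simp only; omega, ?_⟩
      simp only
      rcases le_or_gt ((g j).re.natAbs) ((g j).im.natAbs) with h | h
      · rw [min_eq_left h, max_eq_right h]; exact hsum
      · rw [min_eq_right h.le, max_eq_left h.le]; omega
  -- injective on Iio N
  have hinj : Set.InjOn F (Set.Iio N) := by
    intro j hj j' hj' hFeq
    simp only [Set.mem_Iio] at hj hj'
    have hjk : j ≤ k := by omega
    have hj'k : j' ≤ k := by omega
    obtain ⟨_, hne⟩ := comps _ (hznorm j hjk)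
    rw [hF j, hF j'] at hFeq
    have hFeq' := Prod.ext_iff.mp hFeq
    simp only at hFeq'
    have hrel : ((g j').re.natAbs = (g j).re.natAbs ∧ (g j').im.natAbs = (g j).im.natAbs) ∨
        ((g j').re.natAbs = (g j).im.natAbs ∧ (g j').im.natAbs = (g j).re.natAbs) := by
      obtain ⟨x, hx⟩ : ∃ x, (g j).re.natAbs = x := ⟨_, rfl⟩
      obtain ⟨y, hy⟩ : ∃ y, (g j).im.natAbs = y := ⟨_, rfl⟩
      obtain ⟨x', hx'⟩ : ∃ x, (g j').re.natAbs = x := ⟨_, rfl⟩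
      obtain ⟨y', hy'⟩ : ∃ y, (g j').im.natAbs = y := ⟨_, rfl⟩
      rw [hx, hy] at hne
      rw [hx, hy, hx', hy'] at hFeq'
      rw [hx, hy, hx', hy']
      omega
    obtain ⟨u, hu, hcase⟩ := gi_eight hrel
    rcases hcase with hc | hc
    · have heq : u * π ^ j * (star π) ^ (k - j) = 1 * π ^ j' * (star π) ^ (k - j') := by
        rw [hg j, hg j'] at hc
        linear_combination -hc
      have n1 := gi_not_lt hπprime hnd hjk hj'k hu isUnit_one heq
      have n2 := gi_not_lt hπprime hnd hj'k hjk isUnit_one hu heq.symm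
      omega
    · exfalso
      have heq : 1 * π ^ j' * (star π) ^ (k - j') =
          u * π ^ (k - j) * (star π) ^ (k - (k - j)) := by
        rw [one_mul, ← hg j', hc, hgstar j hjk]
        ring
      have n1 := gi_not_lt hπprime hnd hj'k (by omega : k - j ≤ k) isUnit_one hu heq
      have n2 := gi_not_lt hπprime hnd (by omega : k - j ≤ k) hj'k hu isUnit_one heq.symm
      omega
  rw [himage, Set.ncard_image_of_injOn hinj, ← Finset.coe_range, Set.ncard_coe_finset,
    Finset.card_range]
end

section
/- Let r, s be coprime positive integers with r odd, and let H be an odd positive integer. Then the map (m̃, ñ) ↦ (m, n) defined by 2m − 1 = r(2m̃ − 1) and n = s·ñ gives a bijection between the set of solutions (m̃, ñ) ∈ ℕ≥1 × ℕ of (2ñ)² + (2m̃ − 1)² = H and the set of solutions (m, n) ∈ ℕ≥1 × ℕ of r²(2n)² + s²(2m − 1)² = r²s²H. -/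
/-!
Coprimality forces `s ∣ 2n` and `r ∣ 2m - 1` in `r²(2n)² + s²(2m-1)² = r²s²H`, and cancelling
`(rs)²` leaves `t² + a² = H` for `2n = st`, `2m - 1 = ra`. Then `a` divides an odd number, so is
odd, and as `H` is odd, `t` is even; so `(m, n)` is the image of `((a+1)/2, t/2)`.
-/

namespace ScaledSumOfSquares

def scaledSolutions (r s H : ℕ) : Set (ℕ × ℕ) :=
  {p | 1 ≤ p.1 ∧ r ^ 2 * (2 * p.2) ^ 2 + s ^ 2 * (2 * p.1 - 1) ^ 2 = r ^ 2 * s ^ 2 * H}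

def solutions (H : ℕ) : Set (ℕ × ℕ) :=
  {p | 1 ≤ p.1 ∧ (2 * p.2) ^ 2 + (2 * p.1 - 1) ^ 2 = H}

/-- The substitution `2m - 1 = r(2m̃ - 1)`, `n = s ñ`. -/
def scale (r s : ℕ) (p : ℕ × ℕ) : ℕ × ℕ :=
  ((r * (2 * p.1 - 1) + 1) / 2, s * p.2)

lemma odd_two_mul_sub_one {m : ℕ} (hm : 1 ≤ m) : Odd (2 * m - 1) :=
  ⟨m - 1, by omega⟩

lemma two_mul_succ_div_two_sub_one {k : ℕ} (hk : Odd k) : 2 * ((k + 1) / 2) - 1 = k := by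
  obtain ⟨j, rfl⟩ := hk
  omega

lemma dvd_of_sq_mul_add_sq_mul_eq {r s a b H : ℕ} (hcop : Nat.Coprime r s)
    (h : r ^ 2 * a ^ 2 + s ^ 2 * b ^ 2 = r ^ 2 * s ^ 2 * H) : s ∣ a := by
  have hdvd : s ^ 2 ∣ r ^ 2 * a ^ 2 := by
    refine (Nat.dvd_add_left (dvd_mul_right (s ^ 2) (b ^ 2))).mp ?_
    rw [h]
    exact Dvd.intro_left _ (mul_right_comm _ _ _).symm
  have : s ^ 2 ∣ a ^ 2 := ((hcop.pow 2 2).symm).dvd_of_dvd_mul_left hdvd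
  exact (Nat.pow_dvd_pow_iff two_ne_zero).mp this

lemma sq_add_sq_eq_of_scaled {r s t a H : ℕ} (hr : 0 < r) (hs : 0 < s)
    (h : r ^ 2 * (s * t) ^ 2 + s ^ 2 * (r * a) ^ 2 = r ^ 2 * s ^ 2 * H) : t ^ 2 + a ^ 2 = H := by
  refine Nat.eq_of_mul_eq_mul_left (by positivity : 0 < (r * s) ^ 2) ?_
  linear_combination h

lemma even_of_odd_sq_add_sq {t a : ℕ} (h : Odd (t ^ 2 + a ^ 2)) (ha : Odd a) : Even t := by
  rw [Nat.odd_add'] at h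
  exact (Nat.even_pow' two_ne_zero).mp (h.mp ha.pow)

section

variable {r s H : ℕ}

lemma mapsTo_scale (hr : Odd r) : Set.MapsTo (scale r s) (solutions H) (scaledSolutions r s H) := by
  rintro ⟨m, n⟩ ⟨hm, h⟩
  have hodd := hr.mul (odd_two_mul_sub_one hm)
  refine ⟨?_, ?_⟩
  · obtain ⟨j, hj⟩ := hodd
    simp only [scale, hj]
    omega
  · simp only [scale, two_mul_succ_div_two_sub_one hodd, ← h]
    ring

lemma injOn_scale (hr : Odd r) (hs : 0 < s) : Set.InjOn (scale r s) (solutions H) := by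
  rintro ⟨m₁, n₁⟩ ⟨hm₁, -⟩ ⟨m₂, n₂⟩ ⟨hm₂, -⟩ h
  simp only [scale, Prod.mk.injEq] at h
  obtain ⟨h₁, h₂⟩ := h
  have hscaled : r * (2 * m₁ - 1) = r * (2 * m₂ - 1) := by
    rw [← two_mul_succ_div_two_sub_one (hr.mul (odd_two_mul_sub_one hm₁)), h₁,
      two_mul_succ_div_two_sub_one (hr.mul (odd_two_mul_sub_one hm₂))]
  have hm := Nat.eq_of_mul_eq_mul_left hr.pos hscaled
  exact Prod.ext (by omega) (Nat.eq_of_mul_eq_mul_left hs h₂)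

lemma surjOn_scale (hs : 0 < s) (hcop : Nat.Coprime r s) (hr : Odd r) (hH : Odd H) :
    Set.SurjOn (scale r s) (solutions H) (scaledSolutions r s H) := by
  rintro ⟨m, n⟩ ⟨hm, h⟩
  dsimp only at hm h
  obtain ⟨t, ht⟩ := dvd_of_sq_mul_add_sq_mul_eq hcop h
  obtain ⟨a, ha⟩ : r ∣ 2 * m - 1 :=
    dvd_of_sq_mul_add_sq_mul_eq (b := 2 * n) (H := H) hcop.symm
      (by rw [add_comm, mul_comm (s ^ 2) (r ^ 2)]; exact h)
  rw [ht, ha] at h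
  have hsum := sq_add_sq_eq_of_scaled hr.pos hs h
  have ha_odd : Odd a := (Nat.odd_mul.mp (ha ▸ odd_two_mul_sub_one hm)).2
  obtain ⟨u, rfl⟩ := even_of_odd_sq_add_sq (hsum ▸ hH) ha_odd
  rw [← two_mul, mul_left_comm] at ht
  refine ⟨((a + 1) / 2, u), ⟨?_, ?_⟩, ?_⟩
  · obtain ⟨j, rfl⟩ := ha_odd
    omega
  · rw [two_mul_succ_div_two_sub_one ha_odd, ← hsum]
    ring
  · simp only [scale, two_mul_succ_div_two_sub_one ha_odd, ← ha, Prod.mk.injEq]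
    omega

end

end ScaledSumOfSquares

open ScaledSumOfSquares in
theorem stmt_6_general (r s H : ℕ) (hs : 0 < s) (hcop : Nat.Coprime r s)
    (hrodd : Odd r) (hH : Odd H) :
    Set.BijOn (fun p : ℕ × ℕ => ((r * (2 * p.1 - 1) + 1) / 2, s * p.2))
      {p : ℕ × ℕ | 1 ≤ p.1 ∧ (2 * p.2) ^ 2 + (2 * p.1 - 1) ^ 2 = H}
      {p : ℕ × ℕ | 1 ≤ p.1 ∧
        r ^ 2 * (2 * p.2) ^ 2 + s ^ 2 * (2 * p.1 - 1) ^ 2 = r ^ 2 * s ^ 2 * H} :=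
  ⟨mapsTo_scale hrodd, injOn_scale hrodd hs, surjOn_scale hs hcop hrodd hH⟩

/-- Scaling bijection for the kernel Diophantine equation: for coprime positive `r, s` with
`r` odd and odd `H`, the map `(m̃, ñ) ↦ (m, n)` with `2m − 1 = r(2m̃ − 1)`, `n = s·ñ`,
is a bijection from the solutions of `(2ñ)² + (2m̃−1)² = H` onto the solutions of
`r²(2n)² + s²(2m−1)² = r²s²H` (pairs written `(m, n)` with `m ≥ 1`). -/
theorem stmt_6 (r s H : ℕ) (hr : 0 < r) (hs : 0 < s) (hcop : Nat.Coprime r s)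
    (hrodd : Odd r) (hH : Odd H) :
    Set.BijOn (fun p : ℕ × ℕ => ((r * (2 * p.1 - 1) + 1) / 2, s * p.2))
      {p : ℕ × ℕ | 1 ≤ p.1 ∧ (2 * p.2) ^ 2 + (2 * p.1 - 1) ^ 2 = H}
      {p : ℕ × ℕ | 1 ≤ p.1 ∧
        r ^ 2 * (2 * p.2) ^ 2 + s ^ 2 * (2 * p.1 - 1) ^ 2 = r ^ 2 * s ^ 2 * H} :=
  stmt_6_general r s H hs hcop hrodd hH
end
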